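/- arXiv:1907.10525 — 7 statements merged into one kernel-verified Lean document; each statement's English description precedes it below -/
import Mathlib

section
/- Let (A, I) be a henselian pair. If M and N are finite projective A-modules such that M/IM and N/IN are isomorphic as A/I-modules, then M and N are isomorphic as A-modules. (This is the injectivity, on isomorphism classes, of the base-change map M ↦ M ⊗_A A/I from finite projective A-modules to finite projective A/I-modules.) -/
/-!
Since `M` and `N` are projective, the isomorphism `M/IM ≅ N/IN` and its inverse lift to maps
`M → N` and `N → M`; as `I` lies in the Jacobson radical, Nakayama's lemma makes both surjective.
Their composite is then a surjective endomorphism of the finite module `M`, hence injective, so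
`M → N` is an isomorphism.
-/

open TensorProduct

theorem Module.Projective.exists_surjective_of_surjective_quotSMulTop
    {A P Q : Type*} [CommRing A] {I : Ideal A} (hI : I ≤ Ideal.jacobson ⊥)
    [AddCommGroup P] [Module A P] [AddCommGroup Q] [Module A Q]
    [Module.Projective A P] [Module.Finite A Q]
    (ε : P ⧸ (I • ⊤ : Submodule A P) →ₗ[A] Q ⧸ (I • ⊤ : Submodule A Q))
    (hε : Function.Surjective ε) :
    ∃ f : P →ₗ[A] Q, Function.Surjective f := by
  obtain ⟨f, hf⟩ := Module.projective_lifting_property (I • ⊤ : Submodule A Q).mkQ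
    (ε ∘ₗ (I • ⊤ : Submodule A P).mkQ) (Submodule.mkQ_surjective _)
  refine ⟨f, f.surjective_of_surjective_comp_mkQ I hI ?_⟩
  rw [hf]
  exact hε.comp (Submodule.mkQ_surjective _)

theorem Module.Finite.nonempty_linearEquiv_of_surjective_of_surjective
    {A M N : Type*} [CommRing A] [AddCommGroup M] [Module A M] [AddCommGroup N] [Module A N]
    [Module.Finite A M] {f : M →ₗ[A] N} {g : N →ₗ[A] M}
    (hf : Function.Surjective f) (hg : Function.Surjective g) :
    Nonempty (M ≃ₗ[A] N) :=
  have hgf : Function.Injective (g ∘ f) :=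
    OrzechProperty.injective_of_surjective_endomorphism (g ∘ₗ f) (hg.comp hf)
  ⟨.ofBijective f ⟨hgf.of_comp, hf⟩⟩

/-- **Henselian pairs: injectivity of base change on isomorphism classes of finite
projective modules.** Let `(A, I)` be a henselian pair. If `M` and `N` are finite projective
`A`-modules such that `M/IM ≅ N/IN` as `A/I`-modules, then `M ≅ N` as `A`-modules. -/
theorem henselian_finite_projective_baseChange_injective
    {A : Type*} [CommRing A] (I : Ideal A) [HenselianRing A I]
    (M N : Type*) [AddCommGroup M] [Module A M] [AddCommGroup N] [Module A N]
    [Module.Finite A M] [Module.Projective A M]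
    [Module.Finite A N] [Module.Projective A N]
    (e : ((A ⧸ I) ⊗[A] M) ≃ₗ[A ⧸ I] ((A ⧸ I) ⊗[A] N)) :
    Nonempty (M ≃ₗ[A] N) := by
  let ε : (M ⧸ (I • ⊤ : Submodule A M)) ≃ₗ[A] N ⧸ (I • ⊤ : Submodule A N) :=
    (quotTensorEquivQuotSMul M I).symm ≪≫ₗ e.restrictScalars A ≪≫ₗ quotTensorEquivQuotSMul N I
  obtain ⟨f, hf⟩ := Module.Projective.exists_surjective_of_surjective_quotSMulTop
    HenselianRing.jac ε.toLinearMap ε.surjective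
  obtain ⟨g, hg⟩ := Module.Projective.exists_surjective_of_surjective_quotSMulTop
    HenselianRing.jac ε.symm.toLinearMap ε.symm.surjective
  exact Module.Finite.nonempty_linearEquiv_of_surjective_of_surjective hf hg
end

section
/- Let S be a commutative ring and let M be a finitely presented S-module. Suppose that for every maximal ideal 𝔪 of S the canonical map 𝔪 ⊗_S M → M induced by scalar multiplication is injective (equivalently, Tor₁^S(M, S/𝔪) = 0 for every maximal ideal 𝔪; this holds in particular when the derived tensor product M ⊗^L_S k(x) is concentrated in degree 0 for every closed point x of Spec(S)). Then M is a finite projective S-module. -/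
/-!
Projectivity of a finitely presented module can be checked after localizing at each maximal
ideal `𝔪`, and over the local ring `A = S_𝔪` a finitely presented module `N` is free as soon as
`𝔪A ⊗ N → N` is injective. Since `A` is flat over `S`, base change along `S → A` carries the
injective map `𝔪 ⊗ M → S ⊗ M` to an injective map `(A ⊗ 𝔪) ⊗_A (A ⊗ M) → A ⊗ M`, and it factors
through `𝔪A ⊗_A (A ⊗ M)` via the surjection `A ⊗ 𝔪 → 𝔪A`.
-/

open TensorProduct

section BaseChange

variable {R : Type*} [CommRing R] (A : Type*) [CommRing A] [Algebra R A]
  {N P : Type*} (M : Type*) [AddCommGroup N] [Module R N] [AddCommGroup P] [Module R P]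
  [AddCommGroup M] [Module R M]

lemma LinearMap.rTensor_baseChange_comp_distribBaseChange (f : N →ₗ[R] P) :
    (f.baseChange A).rTensor (A ⊗[R] M) ∘ₗ
        (AlgebraTensorModule.distribBaseChange R A N M).toLinearMap =
      (AlgebraTensorModule.distribBaseChange R A P M).toLinearMap ∘ₗ
        (f.rTensor M).baseChange A := by
  ext; simp

variable {A M} in
lemma LinearMap.rTensor_baseChange_injective [Module.Flat R A] {f : N →ₗ[R] P}
    (hf : Function.Injective (f.rTensor M)) :
    Function.Injective ((f.baseChange A).rTensor (A ⊗[R] M)) := by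
  rw [← Function.Injective.of_comp_iff' _
    (AlgebraTensorModule.distribBaseChange R A N M).bijective]
  have hcomm := congr(⇑$(f.rTensor_baseChange_comp_distribBaseChange A M))
  simp only [LinearMap.coe_comp, LinearEquiv.coe_coe] at hcomm
  rw [hcomm]
  exact (AlgebraTensorModule.distribBaseChange R A P M).injective.comp
    (Module.Flat.lTensor_preserves_injective_linearMap _ hf)

end BaseChange

lemma LinearMap.rTensor_range_subtype_injective {A N P Q : Type*} [CommRing A]
    [AddCommGroup N] [Module A N] [AddCommGroup P] [Module A P] [AddCommGroup Q] [Module A Q]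
    {u : N →ₗ[A] P} (hu : Function.Injective (u.rTensor Q)) :
    Function.Injective ((LinearMap.range u).subtype.rTensor Q) := by
  have hfactor : (LinearMap.range u).subtype ∘ₗ u.rangeRestrict = u := rfl
  rw [← hfactor, LinearMap.rTensor_comp, LinearMap.coe_comp] at hu
  exact hu.of_comp_right (LinearMap.rTensor_surjective Q u.surjective_rangeRestrict)

lemma Ideal.range_liftBaseChange_subtype {R : Type*} [CommRing R] (A : Type*) [CommRing A]
    [Algebra R A] (I : Ideal R) :
    LinearMap.range ((Algebra.linearMap R A ∘ₗ I.subtype).liftBaseChange A) =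
      I.map (algebraMap R A) := by
  rw [LinearMap.range_liftBaseChange, LinearMap.range_comp, Submodule.range_subtype]
  rfl

lemma Ideal.rTensor_map_subtype_injective {R : Type*} [CommRing R] {A : Type*} [CommRing A]
    [Algebra R A] [Module.Flat R A] {I : Ideal R} {M : Type*} [AddCommGroup M] [Module R M]
    (hI : Function.Injective (I.subtype.rTensor M)) :
    Function.Injective ((I.map (algebraMap R A)).subtype.rTensor (A ⊗[R] M)) := by
  rw [← I.range_liftBaseChange_subtype A]
  apply LinearMap.rTensor_range_subtype_injective
  have hfactor : (Algebra.linearMap R A ∘ₗ I.subtype).liftBaseChange A =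
      (AlgebraTensorModule.rid R A A).toLinearMap ∘ₗ I.subtype.baseChange A := by
    ext; simp [Algebra.algebraMap_eq_smul_one]
  rw [hfactor, LinearMap.rTensor_comp, LinearMap.coe_comp]
  exact (LinearEquiv.rTensor _ _).injective.comp (LinearMap.rTensor_baseChange_injective hI)

/-- Let `S` be a commutative ring and `M` a finitely presented `S`-module. If for every
maximal ideal `𝔪` of `S` the canonical map `𝔪 ⊗[S] M → M` induced by scalar
multiplication is injective, then `M` is a finite projective `S`-module. -/
theorem finite_projective_of_finitePresentation_of_maximal_smul_injective
    {S : Type*} [CommRing S] (M : Type*) [AddCommGroup M] [Module S M]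
    [Module.FinitePresentation S M]
    (h : ∀ (𝔪 : Ideal S), 𝔪.IsMaximal →
      Function.Injective (TensorProduct.lift ((LinearMap.lsmul S M).comp 𝔪.subtype))) :
    Module.Finite S M ∧ Module.Projective S M := by
  refine ⟨inferInstance, ?_⟩
  refine Module.projective_of_localization_maximal' (fun P _ ↦ Localization.AtPrime P)
    (fun P _ ↦ Localization.AtPrime P ⊗[S] M) (fun P _ ↦ TensorProduct.mk S _ M 1) ?_
  intro P hP
  have hP_rTensor : Function.Injective (P.subtype.rTensor M) := by
    simpa [← LinearMap.lid_comp_rTensor] using h P hP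
  have : Module.Free (Localization.AtPrime P) (Localization.AtPrime P ⊗[S] M) := by
    apply Module.free_of_maximalIdeal_rTensor_injective
    rw [← Localization.AtPrime.map_eq_maximalIdeal]
    exact Ideal.rTensor_map_subtype_injective hP_rTensor
  infer_instance
end

section
/- Let R be a commutative ring and M a projective R-module. Let Δ : Λ_R(M) → Λ_R(M × M) be the R-algebra homomorphism between exterior algebras induced, by functoriality of the exterior algebra, by the diagonal map M → M × M, m ↦ (m, m), and let inl, inr : Λ_R(M) → Λ_R(M × M) be the R-algebra homomorphisms induced by the two inclusions m ↦ (m, 0) and m ↦ (0, m). Then an element x ∈ Λ_R(M) satisfies Δ(x) = inl(x) + inr(x) if and only if x lies in the image of the canonical map ι : M → Λ_R(M), i.e. in Λ¹(M). (Under the canonical identification Λ(M ⊕ M) ≅ Λ(M) ⊗_R Λ(M), this says that the set of primitive elements {x ∈ Λ(M) | μ*(x) = 1 ⊗ x + x ⊗ 1}, for the comultiplication μ* coming from the diagonal of M, is exactly Λ¹(M).) -/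
/-!
Contracting the primitivity equation `Δ x = inl x + inr x` first with `ψ ∘ snd` and then with
`φ ∘ fst` kills both terms on the right and leaves `Δ (φ ⌋ ψ ⌋ x) = 0`; as `Δ` is split injective,
all double contractions of `x` vanish. Applying `Λ(fst)` shows that the scalar part of `x`
vanishes. Primitivity is preserved by every `Λ(f)`, so a splitting `M → (M →₀ R) → M` reduces
the claim to the free module `F = α →₀ R`. There, killing the coordinate `i` acts on `Λ(F)` as
`z ↦ z - eᵢ ∧ (eᵢ* ⌋ z)`. Killing one by one the finitely many coordinates that `x` involves
turns `x` into its scalar part, and each step subtracts some `eᵢ ∧ (eᵢ* ⌋ x')`. This lies in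
`Λ¹(F)` because the single contractions of `x` are scalars: their own contractions vanish, and
the same coordinate-killing argument one degree down shows that such elements are scalars.
-/

namespace Finsupp

variable {α : Type*}

section Semiring

variable {M : Type*} (R : Type*) [Semiring R] [AddCommMonoid M] [Module R M]

def lfilter (p : α → Prop) [DecidablePred p] : (α →₀ M) →ₗ[R] α →₀ M where
  toFun := filter p
  map_add' _ _ := filter_add
  map_smul' _ _ := filter_smul

@[simp]
theorem lfilter_apply (p : α → Prop) [DecidablePred p] (m : α →₀ M) :
    lfilter R p m = m.filter p :=
  rfl

variable [DecidableEq α]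

theorem lfilter_notMem_empty :
    lfilter R (· ∉ (∅ : Finset α)) = (LinearMap.id : (α →₀ M) →ₗ[R] _) :=
  LinearMap.ext fun m => Finsupp.ext fun j => by simp

theorem lfilter_notMem_union (S T : Finset α) :
    lfilter R (· ∉ S ∪ T) = (lfilter R (· ∉ T) ∘ₗ lfilter R (· ∉ S) : (α →₀ M) →ₗ[R] _) :=
  LinearMap.ext fun m => Finsupp.ext fun j => by
    simp only [lfilter_apply, LinearMap.comp_apply, filter_apply, Finset.mem_union]
    split_ifs <;> tauto

theorem lfilter_notMem_support_apply (m : α →₀ M) : lfilter R (· ∉ m.support) m = 0 :=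
  Finsupp.ext fun j => by simp [filter_apply]

end Semiring

theorem lfilter_notMem_insert (R : Type*) [Ring R] [DecidableEq α] (i : α) (S : Finset α) :
    lfilter R (· ∉ insert i S) =
      (LinearMap.id - (lapply i).smulRight (single i 1) : (α →₀ R) →ₗ[R] α →₀ R) ∘ₗ
        lfilter R (· ∉ S) :=
  LinearMap.ext fun m => Finsupp.ext fun j => by
    simp only [lfilter_apply, LinearMap.comp_apply, LinearMap.sub_apply, LinearMap.id_apply,
      LinearMap.smulRight_apply, lapply_apply, coe_sub, Pi.sub_apply, filter_apply,
      Finset.mem_insert, smul_apply, single_apply, smul_eq_mul]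
    split_ifs <;> simp_all

end Finsupp

namespace ExteriorAlgebra

variable {R M N N' : Type*} [CommRing R] [AddCommGroup M] [Module R M] [AddCommGroup N]
  [Module R N] [AddCommGroup N'] [Module R N']

local infixl:70 " ⌋ " => CliffordAlgebra.contractLeft (Q := (0 : QuadraticForm R _))

theorem map_apply_map (f : M →ₗ[R] N) (g : N →ₗ[R] N') (x : ExteriorAlgebra R M) :
    map g (map f x) = map (g ∘ₗ f) x := by
  rw [← map_comp_map]; rfl

theorem contractLeft_map (f : M →ₗ[R] N) (d : Module.Dual R N) (x : ExteriorAlgebra R M) :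
    d ⌋ map f x = map f ((d ∘ₗ f) ⌋ x) := by
  induction x using CliffordAlgebra.left_induction with
  | algebraMap r => simp [CliffordAlgebra.contractLeft_algebraMap]
  | add x y hx hy => simp only [map_add, hx, hy]
  | ι_mul x m hx =>
    simp only [map_mul, map_apply_ι, CliffordAlgebra.contractLeft_ι_mul, hx, map_sub, map_smul]
    rfl

theorem map_zero_apply (x : ExteriorAlgebra R M) :
    map (0 : M →ₗ[R] N) x = algebraMap R _ (algebraMapInv x) := by
  have : map (0 : M →ₗ[R] N) = (Algebra.ofId R _).comp algebraMapInv :=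
    hom_ext <| LinearMap.ext fun m => by simp [algebraMapInv]
  rw [this]; rfl

theorem map_id_sub_smulRight_apply (f : Module.Dual R M) (e : M) (x : ExteriorAlgebra R M) :
    map (LinearMap.id - f.smulRight e) x = x - ι R e * (f ⌋ x) := by
  induction x using CliffordAlgebra.left_induction with
  | algebraMap r => simp [CliffordAlgebra.contractLeft_algebraMap]
  | add x y hx hy => simp only [map_add, hx, hy, mul_add]; abel
  | ι_mul x m hx =>
    have anticomm : ι R m * ι R e = -(ι R e * ι R m) :=
      eq_neg_of_add_eq_zero_left (ι_add_mul_swap m e)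
    simp only [map_mul, map_apply_ι, hx, CliffordAlgebra.contractLeft_ι_mul, LinearMap.sub_apply,
      LinearMap.id_apply, LinearMap.smulRight_apply, map_sub, map_smul]
    change (ι R m - f m • ι R e) * _ = ι R m * x - ι R e * (f m • x - ι R m * _)
    rw [sub_mul, mul_sub, mul_sub, mul_sub, ← mul_assoc (ι R m), anticomm, smul_mul_assoc,
      smul_mul_assoc, ← mul_assoc (ι R e) (ι R e), ι_sq_zero, zero_mul, smul_zero, mul_smul_comm,
      neg_mul, mul_assoc]
    abel

section Finsupp

variable {α : Type*} [DecidableEq α]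

open Finsupp

theorem exists_map_lfilter_eq_map_zero (y : ExteriorAlgebra R (α →₀ R)) :
    ∃ S : Finset α, map (lfilter R (· ∉ S)) y = map 0 y := by
  have union {x : ExteriorAlgebra R (α →₀ R)} {S : Finset α} (T : Finset α)
      (hS : map (lfilter R (· ∉ S)) x = map 0 x) : map (lfilter R (· ∉ S ∪ T)) x = map 0 x := by
    rw [lfilter_notMem_union, ← map_apply_map, hS, map_apply_map, LinearMap.comp_zero]
  induction y using ExteriorAlgebra.induction with
  | algebraMap r => exact ⟨∅, by simp only [AlgHom.commutes]⟩
  | ι m =>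
    refine ⟨m.support, ?_⟩
    rw [map_apply_ι, map_apply_ι, lfilter_notMem_support_apply, LinearMap.zero_apply]
  | mul a b ha hb =>
    obtain ⟨S, hS⟩ := ha
    obtain ⟨T, hT⟩ := hb
    exact ⟨S ∪ T, by rw [map_mul, map_mul, union T hS, Finset.union_comm, union S hT]⟩
  | add a b ha hb =>
    obtain ⟨S, hS⟩ := ha
    obtain ⟨T, hT⟩ := hb
    exact ⟨S ∪ T, by rw [map_add, map_add, union T hS, Finset.union_comm, union S hT]⟩

theorem mem_range_algebraMap_of_contractLeft_eq_zero {y : ExteriorAlgebra R (α →₀ R)}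
    (h : ∀ φ : Module.Dual R (α →₀ R), φ ⌋ y = 0) : y ∈ Set.range (algebraMap R _) := by
  have fixed (S : Finset α) : map (lfilter R (· ∉ S)) y = y := by
    induction S using Finset.induction_on with
    | empty => rw [lfilter_notMem_empty, map_id]; rfl
    | insert i S _ ih =>
      rw [lfilter_notMem_insert, ← map_apply_map, ih, map_id_sub_smulRight_apply, h, mul_zero,
        sub_zero]
  obtain ⟨S, hS⟩ := exists_map_lfilter_eq_map_zero y
  exact ⟨algebraMapInv y, by rw [← map_zero_apply, ← hS, fixed]⟩

theorem sub_map_zero_mem_range_ι {y : ExteriorAlgebra R (α →₀ R)}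
    (h : ∀ φ : Module.Dual R (α →₀ R), φ ⌋ y ∈ Set.range (algebraMap R _)) :
    y - map 0 y ∈ LinearMap.range (ι R) := by
  suffices ∀ S : Finset α, y - map (lfilter R (· ∉ S)) y ∈ LinearMap.range (ι R) by
    obtain ⟨S, hS⟩ := exists_map_lfilter_eq_map_zero y
    simpa [hS] using this S
  intro S
  induction S using Finset.induction_on with
  | empty =>
    rw [lfilter_notMem_empty, map_id, AlgHom.id_apply, sub_self]
    exact zero_mem _
  | insert i S _ ih =>
    set z := map (lfilter R (· ∉ S)) y
    obtain ⟨r, hr⟩ : lapply i ⌋ z ∈ Set.range (algebraMap R _) := by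
      obtain ⟨r, hr⟩ := h (lapply i ∘ₗ lfilter R (· ∉ S))
      exact ⟨r, by rw [contractLeft_map, ← hr, AlgHom.commutes]⟩
    have split : y - map (lfilter R (· ∉ insert i S)) y = (y - z) + ι R (r • single i 1) := by
      rw [lfilter_notMem_insert, ← map_apply_map, map_id_sub_smulRight_apply, ← hr,
        ← Algebra.commutes, ← Algebra.smul_def, map_smul]
      abel
    rw [split]
    exact add_mem ih ⟨_, rfl⟩

end Finsupp

def IsPrimitive (x : ExteriorAlgebra R M) : Prop :=
  map ((LinearMap.id : M →ₗ[R] M).prod LinearMap.id) x =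
    map (LinearMap.inl R M M) x + map (LinearMap.inr R M M) x

theorem isPrimitive_ι (m : M) : IsPrimitive (ι R m) := by
  rw [IsPrimitive, map_apply_ι, map_apply_ι, map_apply_ι, ← map_add]
  congr 1
  ext <;> simp

theorem IsPrimitive.map {x : ExteriorAlgebra R M} (hx : IsPrimitive x) (f : M →ₗ[R] N) :
    IsPrimitive (map f x) := by
  have h := congrArg (ExteriorAlgebra.map (f.prodMap f)) hx
  simp only [map_add, map_apply_map] at h
  simp only [IsPrimitive, map_apply_map]
  convert h using 4 <;> ext <;> simp

theorem IsPrimitive.map_zero_eq_zero {x : ExteriorAlgebra R M} (hx : IsPrimitive x) :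
    ExteriorAlgebra.map (0 : M →ₗ[R] M) x = 0 := by
  have h := congrArg (ExteriorAlgebra.map (LinearMap.fst R M M)) hx
  rw [map_add, map_apply_map, map_apply_map, map_apply_map, LinearMap.fst_prod,
    LinearMap.fst_comp_inl, LinearMap.fst_comp_inr] at h
  simpa using h

theorem IsPrimitive.contractLeft_contractLeft_eq_zero {x : ExteriorAlgebra R M}
    (hx : IsPrimitive x) (φ ψ : Module.Dual R M) : φ ⌋ (ψ ⌋ x) = 0 := by
  have h := congrArg (fun y => (φ ∘ₗ LinearMap.fst R M M) ⌋ ((ψ ∘ₗ LinearMap.snd R M M) ⌋ y)) hx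
  simp only [map_add, contractLeft_map, LinearMap.comp_assoc, LinearMap.fst_prod,
    LinearMap.snd_prod, LinearMap.snd_comp_inl, LinearMap.fst_comp_inr,
    LinearMap.snd_comp_inr, LinearMap.comp_id, LinearMap.comp_zero, map_zero, LinearMap.zero_apply,
    zero_add] at h
  exact map_injective ⟨LinearMap.fst R M M, LinearMap.fst_prod _ _⟩ (h.trans (map_zero _).symm)

theorem IsPrimitive.mem_range_ι_finsupp {α : Type*} {y : ExteriorAlgebra R (α →₀ R)}
    (hy : IsPrimitive y) : y ∈ LinearMap.range (ι R) := by
  classical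
  have h := sub_map_zero_mem_range_ι fun ψ =>
    mem_range_algebraMap_of_contractLeft_eq_zero fun φ => hy.contractLeft_contractLeft_eq_zero φ ψ
  rwa [hy.map_zero_eq_zero, sub_zero] at h

theorem IsPrimitive.mem_range_ι [Module.Projective R M] {x : ExteriorAlgebra R M}
    (hx : IsPrimitive x) : x ∈ LinearMap.range (ι R) := by
  obtain ⟨s, hs⟩ := Module.projective_def'.mp ‹_›
  obtain ⟨m, hm⟩ := (hx.map s).mem_range_ι_finsupp
  refine ⟨Finsupp.linearCombination R id m, ?_⟩
  rw [← map_apply_ι, hm, map_apply_map, hs, map_id, AlgHom.id_apply]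

end ExteriorAlgebra

/-- **Primitive elements in exterior algebras.** Let `R` be a commutative ring and `M` a
projective `R`-module. Let `Δ : Λ(M) → Λ(M × M)` be the algebra map induced by the
diagonal `m ↦ (m, m)`, and `inl, inr : Λ(M) → Λ(M × M)` the algebra maps induced by the
two inclusions `m ↦ (m, 0)` and `m ↦ (0, m)`. Then `Δ(x) = inl(x) + inr(x)` if and only
if `x` lies in the image `Λ¹(M)` of the canonical map `ι : M → Λ(M)`. -/
theorem exteriorAlgebra_primitive_iff_mem_range_ι
    {R M : Type*} [CommRing R] [AddCommGroup M] [Module R M] [Module.Projective R M]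
    (x : ExteriorAlgebra R M) :
    ExteriorAlgebra.map ((LinearMap.id : M →ₗ[R] M).prod LinearMap.id) x =
        ExteriorAlgebra.map (LinearMap.inl R M M) x +
          ExteriorAlgebra.map (LinearMap.inr R M M) x ↔
      x ∈ LinearMap.range (ExteriorAlgebra.ι R (M := M)) := by
  refine ⟨ExteriorAlgebra.IsPrimitive.mem_range_ι, ?_⟩
  rintro ⟨m, rfl⟩
  exact ExteriorAlgebra.isPrimitive_ι m
end

section
/- Let A be a commutative ring, I₀ ⊆ A an ideal, φ : A → A a ring endomorphism, and J ⊆ A an ideal on which φ is pointwise topologically nilpotent for the I₀-adic topology. Let M be an A-module which is I₀-adically separated (for example, a finite projective module over an I₀-adically separated ring), and let φ_M : M → M be a φ-semilinear endomorphism. If m ∈ J·M satisfies φ_M(m) = m, then m = 0. Consequently, the φ_M-fixed points of M inject into M/J·M. -/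
open Filter

/-! Iterating a fixed point `m = Σ aᵢ xᵢ` with `aᵢ ∈ J` gives `m = Σ φᵏ(aᵢ) φ_Mᵏ(xᵢ)`, and for
large `k` every `φᵏ(aᵢ)` lies in `I₀ⁿ`; so `m ∈ ⋂ₙ I₀ⁿ M = 0`. -/

namespace LinearMap

variable {A M : Type*} [CommRing A] [AddCommGroup M] [Module A M] {σ : A →+* A}

theorem iterate_map_smul (f : M →ₛₗ[σ] M) (k : ℕ) (a : A) (x : M) :
    (⇑f)^[k] (a • x) = (⇑σ)^[k] a • (⇑f)^[k] x := by
  induction k with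
  | zero => rfl
  | succ k ih => simp only [Function.iterate_succ_apply', ih, map_smulₛₗ]

theorem eventually_iterate_mem_pow_smul_top (I J : Ideal A)
    (hσ : ∀ a ∈ J, ∀ n : ℕ, ∀ᶠ k in atTop, (⇑σ)^[k] a ∈ I ^ n)
    (f : M →ₛₗ[σ] M) {x : M} (hx : x ∈ (J • ⊤ : Submodule A M)) (n : ℕ) :
    ∀ᶠ k in atTop, (⇑f)^[k] x ∈ (I ^ n • ⊤ : Submodule A M) := by
  refine Submodule.smul_induction_on hx (fun a ha y _ => ?_) (fun y z hy hz => ?_)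
  · filter_upwards [hσ a ha n] with k hk
    rw [iterate_map_smul]
    exact Submodule.smul_mem_smul hk trivial
  · filter_upwards [hy, hz] with k hyk hzk
    rw [iterate_map_add]
    exact Submodule.add_mem _ hyk hzk

theorem fixedPoint_eq_zero_of_mem_smul_top (I J : Ideal A) [IsHausdorff I M]
    (hσ : ∀ a ∈ J, ∀ n : ℕ, ∀ᶠ k in atTop, (⇑σ)^[k] a ∈ I ^ n)
    (f : M →ₛₗ[σ] M) {x : M} (hx : x ∈ (J • ⊤ : Submodule A M)) (hfix : f x = x) :
    x = 0 := by
  have hmem : ∀ n : ℕ, x ∈ (I ^ n • ⊤ : Submodule A M) := fun n =>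
    let ⟨k, hk⟩ := (eventually_iterate_mem_pow_smul_top I J hσ f hx n).exists
    Function.iterate_fixed hfix k ▸ hk
  have hinf : x ∈ (⨅ n : ℕ, I ^ n • ⊤ : Submodule A M) := Submodule.mem_iInf _ |>.2 hmem
  rwa [IsHausdorff.iInf_pow_smul ‹_›, Submodule.mem_bot] at hinf

end LinearMap

/-- Let `A` be a commutative ring, `I₀ ⊆ A` an ideal, `φ : A → A` a ring endomorphism and
`J ⊆ A` an ideal on which `φ` is pointwise topologically nilpotent for the `I₀`-adic
topology. Let `M` be an `I₀`-adically separated `A`-module and `φM : M → M` a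
`φ`-semilinear endomorphism. If `m ∈ J • M` satisfies `φM m = m`, then `m = 0`. -/
theorem semilinear_fixed_point_in_smul_eq_zero
    {A M : Type*} [CommRing A] [AddCommGroup M] [Module A M]
    (I₀ J : Ideal A) (φ : A →+* A)
    (hnil : ∀ a ∈ J, ∀ n : ℕ, ∃ N : ℕ, ∀ k ≥ N, (⇑φ)^[k] a ∈ I₀ ^ n)
    [IsHausdorff I₀ M]
    (φM : M →ₛₗ[φ] M) (m : M)
    (hm : m ∈ (J • ⊤ : Submodule A M)) (hfix : φM m = m) :
    m = 0 :=
  LinearMap.fixedPoint_eq_zero_of_mem_smul_top I₀ J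
    (fun a ha n => eventually_atTop.2 (hnil a ha n)) φM hm hfix
end

section
/- Let A be a commutative ring, I₀ ⊆ A an ideal, φ : A → A a ring endomorphism with φ(I₀) ⊆ I₀, and J ⊆ A an ideal with φ(J) ⊆ J on which φ is pointwise topologically nilpotent for the I₀-adic topology. Let M be an A-module which is I₀-adically complete and separated (for example, a finite projective module over an I₀-adically complete ring), let φ_M : M → M be a φ-semilinear endomorphism, and assume that the submodule J·M is closed in the I₀-adic topology of M, i.e. ⋂ₙ (J·M + I₀ⁿ·M) = J·M. Then for every m ∈ M with φ_M(m) − m ∈ J·M there exists a unique m' ∈ M such that φ_M(m') = m' and m' − m ∈ J·M. Equivalently, reduction modulo J·M induces a bijection from the φ_M-fixed points of M onto the fixed points of the induced semilinear endomorphism of M/J·M. -/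
/-!
Write `d = φM m - m ∈ J • M`. The orbit `φM^[k] m` has successive differences `φM^[k] d`, which
tend to `0` `I₀`-adically because `φ` is topologically nilpotent on `J`; so the orbit is `I₀`-adically
Cauchy and converges to some `m'`, which is fixed by continuity of `φM`. Every term of the orbit is
congruent to `m` modulo `J • M`, and `J • M` is closed, so `m' ≡ m` as well. Uniqueness: a fixed
point lying in `J • M` equals all of its iterates, which tend to `0`, so it is `0`.
-/

open Filter

theorem SModEq.map_of_le_comap {R S M N : Type*} [Ring R] [Ring S] [AddCommGroup M]
    [AddCommGroup N] [Module R M] [Module S N] {σ : R →+* S} {P : Submodule R M}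
    {Q : Submodule S N} {x y : M} (h : x ≡ y [SMOD P]) (f : M →ₛₗ[σ] N)
    (hPQ : P ≤ Q.comap f) : f x ≡ f y [SMOD Q] := by
  rw [SModEq.sub_mem, ← map_sub]
  exact hPQ (SModEq.sub_mem.1 h)

theorem SModEq.of_eventually_succ {R M : Type*} [Ring R] [AddCommGroup M] [Module R M]
    {P : Submodule R M} {u : ℕ → M} (h : ∀ᶠ k in atTop, u (k + 1) ≡ u k [SMOD P]) :
    ∃ N, ∀ k ≥ N, u k ≡ u N [SMOD P] := by
  obtain ⟨N, hN⟩ := eventually_atTop.1 h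
  refine ⟨N, fun k hk => ?_⟩
  induction k, hk using Nat.le_induction with
  | base => rfl
  | succ k hk ih => exact (hN k hk).trans ih

theorem SModEq.iInf_sup_of_eventually {R M : Type*} [CommRing R] [AddCommGroup M] [Module R M]
    {I : Ideal R} {S : Submodule R M} {u : ℕ → M} {x L : M} (hu : ∀ k, u k ≡ x [SMOD S])
    (hL : ∀ n, ∀ᶠ k in atTop, u k ≡ L [SMOD (I ^ n • ⊤ : Submodule R M)]) :
    L ≡ x [SMOD ⨅ n : ℕ, S ⊔ I ^ n • ⊤] := by
  refine SModEq.sub_mem.2 (Submodule.mem_iInf _ |>.2 fun n => ?_)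
  obtain ⟨k, hk⟩ := (hL n).exists
  rw [← sub_add_sub_cancel' (u k) x L]
  exact Submodule.add_mem_sup (SModEq.sub_mem.1 (hu k)) (SModEq.sub_mem.1 hk.symm)

theorem IsPrecomplete.exists_eventually_sModEq {R M : Type*} [CommRing R] [AddCommGroup M]
    [Module R M] {I : Ideal R} [IsPrecomplete I M] {u : ℕ → M}
    (h : ∀ n, ∃ N, ∀ k ≥ N, u k ≡ u N [SMOD (I ^ n • ⊤ : Submodule R M)]) :
    ∃ L, ∀ n, ∀ᶠ k in atTop, u k ≡ L [SMOD (I ^ n • ⊤ : Submodule R M)] := by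
  choose N hN using h
  have hcauchy {p q : ℕ} (hpq : p ≤ q) :
      u (N p) ≡ u (N q) [SMOD (I ^ p • ⊤ : Submodule R M)] :=
    calc u (N p) ≡ u (max (N p) (N q)) [SMOD (I ^ p • ⊤ : Submodule R M)] :=
          (hN p _ (le_max_left _ _)).symm
      _ ≡ u (N q) [SMOD (I ^ p • ⊤ : Submodule R M)] :=
          (hN q _ (le_max_right _ _)).mono (Submodule.pow_smul_top_le I M hpq)
  obtain ⟨L, hL⟩ := IsPrecomplete.prec ‹_› hcauchy
  exact ⟨L, fun n => eventually_atTop.2 ⟨N n, fun k hk => (hN n k hk).trans (hL n)⟩⟩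

theorem LinearMap.iterate_map_smulₛₗ {R M : Type*} [Semiring R] [AddCommMonoid M] [Module R M]
    {σ : R →+* R} (f : M →ₛₗ[σ] M) (k : ℕ) (a : R) (x : M) :
    f^[k] (a • x) = (⇑σ)^[k] a • f^[k] x := by
  induction k generalizing a x with
  | zero => rfl
  | succ k ih => simp only [Function.iterate_succ_apply, map_smulₛₗ, ih]

theorem LinearMap.smul_top_le_comap {R S M N : Type*} [CommSemiring R] [CommSemiring S]
    [AddCommMonoid M] [AddCommMonoid N] [Module R M] [Module S N] {σ : R →+* S}
    (f : M →ₛₗ[σ] N) {I : Ideal R} {I' : Ideal S} (hI : I ≤ I'.comap σ) :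
    I • (⊤ : Submodule R M) ≤ (I' • (⊤ : Submodule S N)).comap f := by
  intro x hx
  refine Submodule.smul_induction_on hx (fun a ha y _ => ?_) (fun y z hy hz => ?_)
  · simpa only [Submodule.mem_comap, map_smulₛₗ] using
      Submodule.smul_mem_smul (show σ a ∈ I' from hI ha) (Submodule.mem_top (x := f y))
  · exact Submodule.add_mem _ hy hz

section SemilinearEndomorphism

variable {A M : Type*} [CommRing A] [AddCommGroup M] [Module A M] {φ : A →+* A}
  (f : M →ₛₗ[φ] M)

theorem LinearMap.eventually_iterate_mem_smul_top {I J : Ideal A}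
    (hnil : ∀ a ∈ J, ∀ᶠ k in atTop, (⇑φ)^[k] a ∈ I) {z : M}
    (hz : z ∈ J • (⊤ : Submodule A M)) : ∀ᶠ k in atTop, f^[k] z ∈ I • (⊤ : Submodule A M) := by
  refine Submodule.smul_induction_on hz (fun a ha x _ => ?_) (fun x y hx hy => ?_)
  · filter_upwards [hnil a ha] with k hk
    rw [f.iterate_map_smulₛₗ]
    exact Submodule.smul_mem_smul hk trivial
  · filter_upwards [hx, hy] with k hxk hyk
    rw [iterate_map_add]
    exact Submodule.add_mem _ hxk hyk

theorem LinearMap.iterate_sModEq_self {J : Ideal A} (hJ : J ≤ J.comap φ) {x : M}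
    (hx : f x ≡ x [SMOD (J • ⊤ : Submodule A M)]) (k : ℕ) :
    f^[k] x ≡ x [SMOD (J • ⊤ : Submodule A M)] := by
  induction k with
  | zero => rfl
  | succ k ih =>
    rw [Function.iterate_succ_apply']
    exact (ih.map_of_le_comap f (f.smul_top_le_comap hJ)).trans hx

theorem LinearMap.apply_eq_of_eventually_iterate_sModEq {I : Ideal A} [IsHausdorff I M]
    (hI : I ≤ I.comap φ) {x L : M}
    (hL : ∀ n, ∀ᶠ k in atTop, f^[k] x ≡ L [SMOD (I ^ n • ⊤ : Submodule A M)]) : f L = L := by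
  refine (IsHausdorff.eq_iff_smodEq (I := I)).2 fun n => ?_
  obtain ⟨N, hN⟩ := eventually_atTop.1 (hL n)
  have hIn : I ^ n ≤ (I ^ n).comap φ := (Ideal.pow_right_mono hI n).trans (Ideal.le_comap_pow φ n)
  calc f L ≡ f (f^[N] x) [SMOD (I ^ n • ⊤ : Submodule A M)] :=
        ((hN N le_rfl).symm.map_of_le_comap f (f.smul_top_le_comap hIn))
    _ = f^[N + 1] x := (Function.iterate_succ_apply' f N x).symm
    _ ≡ L [SMOD (I ^ n • ⊤ : Submodule A M)] := hN (N + 1) N.le_succ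

theorem LinearMap.eq_zero_of_apply_eq_self_of_mem_smul_top {I J : Ideal A} [IsHausdorff I M]
    (hnil : ∀ a ∈ J, ∀ n, ∀ᶠ k in atTop, (⇑φ)^[k] a ∈ I ^ n) {z : M}
    (hz : z ∈ J • (⊤ : Submodule A M)) (hfix : f z = z) : z = 0 := by
  refine IsHausdorff.haus ‹_› z fun n => SModEq.zero.2 ?_
  obtain ⟨k, hk⟩ := (f.eventually_iterate_mem_smul_top (fun a ha => hnil a ha n) hz).exists
  rwa [Function.iterate_fixed hfix] at hk

end SemilinearEndomorphism

/-- Let `A` be a commutative ring, `I₀ ⊆ A` an ideal, `φ : A → A` a ring endomorphism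
with `φ(I₀) ⊆ I₀`, and `J ⊆ A` an ideal with `φ(J) ⊆ J` on which `φ` is pointwise
topologically nilpotent for the `I₀`-adic topology. Let `M` be an `I₀`-adically complete
(and separated) `A`-module, `φM : M → M` a `φ`-semilinear endomorphism, and assume that
`J • M` is closed in the `I₀`-adic topology of `M`, i.e. `⋂ₙ (J•M + I₀ⁿ•M) = J•M`.
Then every `m ∈ M` with `φM m − m ∈ J • M` admits a unique `m' ∈ M` with `φM m' = m'`
and `m' − m ∈ J • M`; equivalently, reduction modulo `J • M` is a bijection from the
`φM`-fixed points of `M` onto the fixed points of `M/(J • M)`. -/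
theorem semilinear_fixed_point_lifting
    {A M : Type*} [CommRing A] [AddCommGroup M] [Module A M]
    (I₀ J : Ideal A) (φ : A →+* A)
    (hI₀ : ∀ a ∈ I₀, φ a ∈ I₀) (hJ : ∀ a ∈ J, φ a ∈ J)
    (hnil : ∀ a ∈ J, ∀ n : ℕ, ∃ N : ℕ, ∀ k ≥ N, (⇑φ)^[k] a ∈ I₀ ^ n)
    [IsAdicComplete I₀ M]
    (hclosed : (⨅ n : ℕ, ((J • ⊤ : Submodule A M) ⊔ I₀ ^ n • ⊤)) = (J • ⊤ : Submodule A M))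
    (φM : M →ₛₗ[φ] M) (m : M) (hm : φM m - m ∈ (J • ⊤ : Submodule A M)) :
    ∃! m' : M, φM m' = m' ∧ m' - m ∈ (J • ⊤ : Submodule A M) := by
  have hnil' : ∀ a ∈ J, ∀ n, ∀ᶠ k in atTop, (⇑φ)^[k] a ∈ I₀ ^ n :=
    fun a ha n => eventually_atTop.2 (hnil a ha n)
  have horbit_cauchy (n : ℕ) : ∀ᶠ k in atTop,
      φM^[k + 1] m ≡ φM^[k] m [SMOD (I₀ ^ n • ⊤ : Submodule A M)] := by
    filter_upwards [φM.eventually_iterate_mem_smul_top (fun a ha => hnil' a ha n) hm] with k hk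
    rwa [SModEq.sub_mem, Function.iterate_succ_apply, ← iterate_map_sub]
  obtain ⟨L, hL⟩ := IsPrecomplete.exists_eventually_sModEq (I := I₀)
    fun n => SModEq.of_eventually_succ (u := fun k => φM^[k] m) (horbit_cauchy n)
  have hLfix : φM L = L := φM.apply_eq_of_eventually_iterate_sModEq hI₀ hL
  have hLm : L - m ∈ (J • ⊤ : Submodule A M) := by
    rw [← hclosed, ← SModEq.sub_mem]
    exact SModEq.iInf_sup_of_eventually (φM.iterate_sModEq_self hJ (SModEq.sub_mem.2 hm)) hL
  refine ⟨L, ⟨hLfix, hLm⟩, fun y ⟨hyfix, hym⟩ => ?_⟩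
  refine sub_eq_zero.1 (φM.eq_zero_of_apply_eq_self_of_mem_smul_top hnil' ?_ ?_)
  · simpa using Submodule.sub_mem _ hym hLm
  · rw [map_sub, hyfix, hLfix]
end

section
/- Let p be a prime number, let A be a commutative ring, and let 0 → M₁ →^f M₂ → M → 0 be a short exact sequence of A-modules in which M₁ and M₂ are finite projective A-modules and M is killed by pⁿ for some n ≥ 0. Let B be a commutative A-algebra in which p is a nonzerodivisor. Then the base-changed map f ⊗ id_B : M₁ ⊗_A B → M₂ ⊗_A B is injective; equivalently Tor₁^A(M, B) = 0, i.e. the derived base change M ⊗^L_A B is concentrated in degree 0. -/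
/-!
If `pⁿ` kills the cokernel `M` of `f`, then `pⁿ • x` lies in the image of `f` for every `x : M₂`,
so `f` has a left inverse up to `pⁿ`: a map `h` with `h ∘ f = pⁿ • id`. This identity survives
base change, and `pⁿ` acts injectively on `B ⊗[A] M₁` because `M₁` is flat and `p` is a
nonzerodivisor in `B`; hence `f ⊗ id_B` is injective.
-/

open scoped nonZeroDivisors

namespace LinearMap

variable {R : Type*} [CommRing R] {M₁ M₂ M : Type*} [AddCommGroup M₁] [Module R M₁]
  [AddCommGroup M₂] [Module R M₂] [AddCommGroup M] [Module R M]

theorem exists_comp_eq_smul_id_of_exact {f : M₁ →ₗ[R] M₂} {g : M₂ →ₗ[R] M}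
    (hf : Function.Injective f) (hfg : Function.Exact f g) {c : R} (hc : ∀ x : M, c • x = 0) :
    ∃ h : M₂ →ₗ[R] M₁, h ∘ₗ f = c • LinearMap.id := by
  have hmem : ∀ x : M₂, c • x ∈ range f := fun x ↦ by
    rw [← hfg.linearMap_ker_eq, mem_ker, map_smul, hc]
  refine ⟨(LinearEquiv.ofInjective f hf).symm ∘ₗ codRestrict (range f) (c • id) hmem, ?_⟩
  ext x
  apply hf
  simp [LinearEquiv.ofInjective_symm_apply]

theorem injective_of_comp_eq_smul_id {f : M₁ →ₗ[R] M₂} {h : M₂ →ₗ[R] M₁} {c : R}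
    (hhf : h ∘ₗ f = c • LinearMap.id) (hc : IsSMulRegular M₁ c) : Function.Injective f :=
  fun x y hxy ↦ hc <| by
    simpa [← comp_apply (f := h), hhf] using congrArg h hxy

theorem baseChange_injective_of_exact_of_smul_eq_zero {B : Type*} [CommRing B] [Algebra R B]
    [Module.Flat R M₁] {f : M₁ →ₗ[R] M₂} {g : M₂ →ₗ[R] M}
    (hf : Function.Injective f) (hfg : Function.Exact f g) {c : R} (hc : ∀ x : M, c • x = 0)
    (hcB : algebraMap R B c ∈ B⁰) : Function.Injective (f.baseChange B) := by
  obtain ⟨h, hhf⟩ := exists_comp_eq_smul_id_of_exact hf hfg hc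
  refine injective_of_comp_eq_smul_id (h := h.baseChange B) (c := algebraMap R B c) ?_
    (Module.Flat.isSMulRegular_of_nonZeroDivisors hcB)
  rw [← baseChange_comp, hhf, baseChange_smul, baseChange_id, algebraMap_smul]

end LinearMap

theorem baseChange_injective_of_torsion_cokernel_general
    {A : Type*} [CommRing A] (B : Type*) [CommRing B] [Algebra A B]
    {M₁ M₂ M : Type*} [AddCommGroup M₁] [Module A M₁] [AddCommGroup M₂] [Module A M₂]
    [AddCommGroup M] [Module A M]
    [Module.Projective A M₁]
    (p n : ℕ)
    (f : M₁ →ₗ[A] M₂) (g : M₂ →ₗ[A] M)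
    (hf : Function.Injective f)
    (hfg : Function.Exact f g)
    (htors : ∀ x : M, (p ^ n : ℕ) • x = 0)
    (hpB : (p : B) ∈ nonZeroDivisors B) :
    Function.Injective (f.baseChange B) :=
  LinearMap.baseChange_injective_of_exact_of_smul_eq_zero hf hfg (c := ((p ^ n : ℕ) : A))
    (fun x ↦ by rw [Nat.cast_smul_eq_nsmul, htors])
    (by simpa using pow_mem hpB n)

/-- Let `p` be a prime, `A` a commutative ring and `0 → M₁ → M₂ → M → 0` a short exact
sequence of `A`-modules with `M₁`, `M₂` finite projective and `M` killed by `pⁿ`. If `B`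
is a commutative `A`-algebra in which `p` is a nonzerodivisor, then the base-changed map
`M₁ ⊗[A] B → M₂ ⊗[A] B` is injective (i.e. `Tor₁^A(M, B) = 0`, i.e. the derived base
change of `M` to `B` is concentrated in degree `0`). -/
theorem baseChange_injective_of_torsion_cokernel
    {A : Type*} [CommRing A] (B : Type*) [CommRing B] [Algebra A B]
    {M₁ M₂ M : Type*} [AddCommGroup M₁] [Module A M₁] [AddCommGroup M₂] [Module A M₂]
    [AddCommGroup M] [Module A M]
    [Module.Finite A M₁] [Module.Projective A M₁]
    [Module.Finite A M₂] [Module.Projective A M₂]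
    (p n : ℕ) (hp : p.Prime)
    (f : M₁ →ₗ[A] M₂) (g : M₂ →ₗ[A] M)
    (hf : Function.Injective f) (hg : Function.Surjective g)
    (hfg : Function.Exact f g)
    (htors : ∀ x : M, (p ^ n : ℕ) • x = 0)
    (hpB : (p : B) ∈ nonZeroDivisors B) :
    Function.Injective (f.baseChange B) :=
  baseChange_injective_of_torsion_cokernel_general B p n f g hf hfg htors hpB
end

section
/- Let R = (ℤ[x])[[f]] be the ring of formal power series in a variable f with coefficients in the polynomial ring ℤ[x] (equivalently, the f-adic completion of the polynomial ring ℤ[f, x]). Let D̂ denote the f-adic completion of the direct sum ⊕_{i∈ℕ} R, and let α : D̂ → D̂ be the R-linear map obtained by functoriality of f-adic completion from the R-linear endomorphism of ⊕_{i∈ℕ} R sending the i-th standard basis vector s_i to f·t_i − x·t_{i−1}, where t_j denotes the j-th standard basis vector of the target and t_{−1} := 0. Then α is injective. -/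
/-!
Represent an element of the completion by an `f`-adic Cauchy sequence `(w m)` in `⊕ R`. If `α`
kills it, then `f * w m i ≡ x * w m (i + 1) mod f ^ m` for every `i`, and comparing coefficients
of `f` gives `coeff k (w m i) = x ^ j * coeff (k + j) (w m (i + j))` whenever `k + j < m`. By
the Cauchy condition the coefficient `coeff k (w n i)`, `k < n`, equals `coeff k (w m i)` for all
`m ≥ n`, so it is divisible by every power of `x` and vanishes. Hence `w n ∈ f ^ n (⊕ R)`.
-/

noncomputable section

/-- The ring `R = (ℤ[x])[[f]]` of formal power series in the variable `f` with
coefficients in the polynomial ring `ℤ[x]`. -/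
abbrev CounterexampleRing : Type := PowerSeries (Polynomial ℤ)

/-- The power series variable `f ∈ R`. -/
def fElt : CounterexampleRing := PowerSeries.X

/-- The polynomial variable `x ∈ R` (as a constant power series). -/
def xElt : CounterexampleRing := PowerSeries.C (Polynomial.X : Polynomial ℤ)

/-- The `R`-linear endomorphism of `⊕_{i ∈ ℕ} R` sending the `i`-th standard basis
vector `s_i` to `f • t_i − x • t_{i−1}` (with `t_{−1} := 0`). -/
def alphaZero : (ℕ →₀ CounterexampleRing) →ₗ[CounterexampleRing] (ℕ →₀ CounterexampleRing) :=
  Finsupp.lsum CounterexampleRing fun i =>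
    LinearMap.toSpanSingleton CounterexampleRing (ℕ →₀ CounterexampleRing)
      (Finsupp.single i fElt - if i = 0 then 0 else Finsupp.single (i - 1) xElt)

open PowerSeries

theorem Finsupp.mem_ideal_span_singleton_smul_top_iff {R ι : Type*} [CommSemiring R] {g : R}
    {d : ι →₀ R} : d ∈ (Ideal.span {g} • ⊤ : Submodule R (ι →₀ R)) ↔ ∀ i, g ∣ d i := by
  rw [Submodule.ideal_span_singleton_smul, Submodule.mem_smul_pointwise_iff_exists]
  constructor
  · rintro ⟨e, -, rfl⟩ i
    exact dvd_mul_right g (e i)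
  · intro h
    choose c hc using h
    classical
    refine ⟨Finsupp.onFinset d.support (fun i => if d i = 0 then 0 else c i) fun i hi => ?_,
      trivial, Finsupp.ext fun i => ?_⟩
    · exact Finsupp.mem_support_iff.mpr fun h0 => hi (if_pos h0)
    · by_cases hi : d i = 0 <;> simp [hi, ← hc]

theorem AdicCompletion.mk_eq_zero_iff {R M : Type*} [CommRing R] [AddCommGroup M] [Module R M]
    {I : Ideal R} (w : AdicCauchySequence I M) :
    mk I M w = 0 ↔ ∀ n, w n ∈ (I ^ n • ⊤ : Submodule R M) := by
  simp [AdicCompletion.ext_iff, Submodule.Quotient.mk_eq_zero]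

theorem Polynomial.eq_zero_of_forall_X_pow_dvd {R : Type*} [Semiring R] {p : Polynomial R}
    (h : ∀ n, Polynomial.X ^ n ∣ p) : p = 0 :=
  Polynomial.ext fun d => Polynomial.X_pow_dvd_iff.mp (h (d + 1)) d d.lt_succ_self

namespace PowerSeries

variable {A : Type*} [CommRing A] {a : A}

theorem coeff_eq_pow_mul_coeff_of_X_pow_dvd {m : ℕ} {u : ℕ → A⟦X⟧}
    (hu : ∀ i, X ^ m ∣ X * u i - C a * u (i + 1)) {i j k : ℕ} (hkj : k + j < m) :
    coeff k (u i) = a ^ j * coeff (k + j) (u (i + j)) := by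
  induction j generalizing i k with
  | zero => simp
  | succ j ih =>
    have hstep : coeff k (u i) = a * coeff (k + 1) (u (i + 1)) := by
      have := X_pow_dvd_iff.mp (hu i) (k + 1) (by omega)
      rwa [map_sub, coeff_succ_X_mul, coeff_C_mul, sub_eq_zero] at this
    rw [hstep, ih (by omega), pow_succ']
    ring_nf

theorem X_pow_dvd_of_X_pow_dvd_X_mul_sub_C_mul (ha : ∀ b : A, (∀ j, a ^ j ∣ b) → b = 0)
    {w : ℕ → ℕ → A⟦X⟧} (hrel : ∀ m i, X ^ m ∣ X * w m i - C a * w m (i + 1))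
    (hcauchy : ∀ n m i, n ≤ m → X ^ n ∣ w m i - w n i) (n i : ℕ) : X ^ n ∣ w n i := by
  refine X_pow_dvd_iff.mpr fun k hk => ha _ fun j => ?_
  have hstable : coeff k (w n i) = coeff k (w (n + j) i) := by
    have := X_pow_dvd_iff.mp (hcauchy n (n + j) i (by omega)) k hk
    rwa [map_sub, sub_eq_zero, eq_comm] at this
  rw [hstable, coeff_eq_pow_mul_coeff_of_X_pow_dvd (hrel (n + j)) (j := j) (by omega)]
  exact dvd_mul_right _ _

end PowerSeries

theorem alphaZero_apply (v : ℕ →₀ CounterexampleRing) (i : ℕ) :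
    alphaZero v i = fElt * v i - xElt * v (i + 1) := by
  induction v using Finsupp.induction_linear with
  | zero => simp
  | add v w hv hw =>
    simp only [map_add, Finsupp.add_apply, hv, hw]
    ring
  | single j r =>
    rcases j with _ | j <;>
      simp [alphaZero, Finsupp.single_apply] <;> split_ifs <;> first | omega | simp [mul_comm]

/-- The map `α : D̂ → D̂` obtained from `alphaZero` by functoriality of `f`-adic
completion, where `D̂` is the `f`-adic completion of `⊕_{i ∈ ℕ} R`, is injective. -/
theorem adicCompletion_map_alphaZero_injective :
    Function.Injective
      (AdicCompletion.map (Ideal.span {fElt}) alphaZero) := by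
  rw [injective_iff_map_eq_zero]
  intro a ha
  obtain ⟨w, rfl⟩ := AdicCompletion.mk_surjective _ _ a
  rw [AdicCompletion.map_mk, AdicCompletion.mk_eq_zero_iff] at ha
  have hrel : ∀ m i, X ^ m ∣ X * w m i - C Polynomial.X * w m (i + 1) := fun m i => by
    have hm := ha m
    rw [AdicCompletion.AdicCauchySequence.map_apply_coe, Ideal.span_singleton_pow,
      Finsupp.mem_ideal_span_singleton_smul_top_iff] at hm
    rw [← fElt, ← xElt, ← alphaZero_apply]
    exact hm i
  have hcauchy : ∀ n m i, n ≤ m → X ^ n ∣ w m i - w n i := fun n m i hnm => by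
    have hmem := SModEq.sub_mem.mp (w.property hnm).symm
    rw [Ideal.span_singleton_pow, Finsupp.mem_ideal_span_singleton_smul_top_iff] at hmem
    exact hmem i
  refine (AdicCompletion.mk_eq_zero_iff w).mpr fun n => ?_
  rw [Ideal.span_singleton_pow, Finsupp.mem_ideal_span_singleton_smul_top_iff]
  exact X_pow_dvd_of_X_pow_dvd_X_mul_sub_C_mul (fun _ => Polynomial.eq_zero_of_forall_X_pow_dvd)
    hrel hcauchy n
end
end
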